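/- With Q_n ∈ R[z] the Casoratian of x₁, x₃, …, x_{2n−1} over R = ℚ[t₁, t₂, t₃, …], define q_k := Q_k evaluated at z = 0 (an element of R), with q₋₁ = q₀ = 1. Then for every k ≥ 1: (i) the formal partial derivative ∂q_k/∂t_j vanishes whenever j is even or j > 2k−1, so q_k is a polynomial in the odd variables t₁, t₃, …, t_{2k−1} only; (ii) ∂q_k/∂t_{2k−1} = ((−1)^{k+1}/(2k−1))·q_{k−2}; in particular q_k is linear in t_{2k−1}, of the form q_k = ((−1)^{k+1}/(2k−1))·q_{k−2}·t_{2k−1} + ψ_k(t₁, t₃, …, t_{2k−3}). -/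

import Mathlib

open Polynomial

noncomputable section

/-- The base ring `R = ℚ[t₁, t₂, t₃, …]`: polynomials in countably many
variables `t_j = MvPolynomial.X j` (only indices `j ≥ 1` occur). -/
abbrev Rt : Type := MvPolynomial ℕ ℚ

/-- `z_j := (-1)^{j+1} (z + t_j)` as an element of `R[z]`. -/
def zj (j : ℕ) : Polynomial Rt :=
  (-1) ^ (j + 1) * (X + C (MvPolynomial.X j))

/-- The `k×k` lower Hessenberg matrix `M_k` with (1-indexed) entries
`(M_k)_{IJ} = z_{I-J+1}` for `J ≤ I`, `(M_k)_{I,I+1} = -I`, and `0` otherwise.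
Below `i j : Fin k` are 0-indexed, i.e. `I = i+1`, `J = j+1`. -/
def Mhess (k : ℕ) : Matrix (Fin k) (Fin k) (Polynomial Rt) :=
  Matrix.of fun i j =>
    if (j : ℕ) ≤ (i : ℕ) then zj ((i : ℕ) - (j : ℕ) + 1)
    else if (j : ℕ) = (i : ℕ) + 1 then -(((i : ℕ) + 1 : ℕ) : Polynomial Rt)
    else 0

/-- `x₀ := 1` and `x_k := (1/k!) det M_k` for `k ≥ 1`; these satisfy
`x_k(z+1) - x_k(z) = x_{k-1}(z)` and have generating function
`exp (Σ_{k≥1} (-1)^{k+1} (z+t_k) u^k / k)`. -/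
def xpoly (k : ℕ) : Polynomial Rt :=
  if k = 0 then 1
  else C (MvPolynomial.C ((k.factorial : ℚ)⁻¹)) * (Mhess k).det

/-- `Q_n := det (x_{2i-1}(z+j-1))_{i,j=1,…,n}`, the Casoratian of
`x₁, x₃, …, x_{2n-1}` (here `i j : Fin n` are 0-indexed, so the row function is
`x_{2i+1}` and the `j`-th column is composition with `z + j`); `Q 0 = 1`. -/
def Qcas (n : ℕ) : Polynomial Rt :=
  Matrix.det (Matrix.of fun i j : Fin n =>
    (xpoly (2 * (i : ℕ) + 1)).comp (X + C ((j : ℕ) : Rt)))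

/-- `q_k := Q_k(0) ∈ R` (so `q 0 = 1 = q₀`). -/
def qval (k : ℕ) : Rt := (Qcas k).eval 0

end

/-! Expanding the Hessenberg determinant along its last row gives the recursion
`k x_k = ∑_{j<k} z_{k-j} x_j`, from which `x_k(z+1) - x_k(z) = x_{k-1}(z)` and
`∂x_k/∂t_p = ((-1)^{p+1}/p) x_{k-p}` follow by induction. Differentiating the Casoratian row
by row, `∂/∂t_p` turns the row of `x_{2i+1}` into a multiple of the row of `x_{2i+1-p}`: for even
`p` this is another row of the matrix, and for `p > 2i+1` it is zero. For `p = 2k-1` only the last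
row survives, as a constant row; taking column differences twice then reduces the determinant
to `± q_{k-2}`. -/

open Finset Matrix

namespace Derivation

variable {R A : Type*} [CommSemiring R] [CommRing A] [Algebra R A] (D : Derivation R A A)

theorem leibniz_finset_prod {ι : Type*} [DecidableEq ι] (s : Finset ι) (f : ι → A) :
    D (∏ i ∈ s, f i) = ∑ i ∈ s, D (f i) * ∏ j ∈ s.erase i, f j := by
  induction s using Finset.induction_on with
  | empty => simp
  | insert a s ha ih =>
    have hs : ∀ i ∈ s, D (f i) * ∏ j ∈ (insert a s).erase i, f j
        = f a * (D (f i) * ∏ j ∈ s.erase i, f j) := fun i hi => by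
      rw [erase_insert_of_ne (ne_of_mem_of_not_mem hi ha).symm,
        prod_insert fun h => ha (mem_of_mem_erase h)]
      ring
    rw [prod_insert ha, leibniz, sum_insert ha, erase_insert ha, ih, sum_congr rfl hs, ← mul_sum,
      smul_eq_mul, smul_eq_mul]
    ring

theorem map_det {n : Type*} [Fintype n] [DecidableEq n] (M : Matrix n n A) :
    D M.det = ∑ i, (M.updateRow i fun j => D (M i j)).det := by
  have det_rows : ∀ N : Matrix n n A,
      N.det = ∑ σ : Equiv.Perm n, (Equiv.Perm.sign σ : ℤ) • ∏ i, N i (σ i) := fun N => by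
    rw [← det_transpose, det_apply]
    rfl
  simp only [det_rows, map_sum, map_zsmul, leibniz_finset_prod, smul_sum]
  rw [sum_comm]
  refine sum_congr rfl fun i _ => sum_congr rfl fun σ _ => ?_
  rw [← mul_prod_erase univ _ (mem_univ i), updateRow_self,
    prod_congr rfl fun j hj => congrFun (updateRow_ne (ne_of_mem_erase hj)) (σ j)]

end Derivation

-- Subtracting from each column its predecessor turns the row of ones into `(1, 0, …, 0)`.
theorem Matrix.det_eq_of_row_eq_one {R : Type*} [CommRing R] {n : ℕ}
    (A : Matrix (Fin (n + 1)) (Fin (n + 1)) R) (p : Fin (n + 1)) (hp : ∀ j, A p j = 1) :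
    A.det = (-1) ^ (p : ℕ) *
      (of fun i j : Fin n => A (p.succAbove i) j.succ - A (p.succAbove i) j.castSucc).det := by
  let B : Matrix (Fin (n + 1)) (Fin (n + 1)) R :=
    of fun i j => Fin.cases (A i 0) (fun j => A i j.succ - A i j.castSucc) j
  have hAB : A.det = B.det :=
    det_eq_of_forall_col_eq_smul_add_pred (fun _ => 1) (fun _ => rfl) fun i j => by simp [B]
  rw [hAB, det_succ_row B p, sum_eq_single 0 (fun j _ hj => ?_) (by simp)]
  · simp [B, hp, Fin.succAbove_zero]
    rfl
  · obtain ⟨l, rfl⟩ := Fin.exists_succ_eq.mpr hj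
    simp [B, hp]

theorem sum_range_neg_one_pow_mul_add_succ {R : Type*} [CommRing R] (f : ℕ → R) (k : ℕ) :
    ∑ i ∈ range k, (-1 : R) ^ (k - i + 1) * (f (i + 1) + f i) = (-1) ^ (k + 1) * f 0 + f k := by
  have := sum_range_sub' (fun i => (-1 : R) ^ (k - i + 1) * f i) k
  simp only [Nat.sub_zero, Nat.sub_self, zero_add, pow_one, neg_one_mul, sub_neg_eq_add] at this
  rw [← this]
  refine sum_congr rfl fun i hi => ?_
  rw [show k - i + 1 = k - (i + 1) + 1 + 1 by have := mem_range.mp hi; omega, pow_succ]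
  ring

theorem Mhess_apply_congr {k k' : ℕ} {i j : Fin k} {i' j' : Fin k'} (hi : (i : ℕ) = i')
    (hj : (j : ℕ) = j') : Mhess k i j = Mhess k' i' j' := by
  simp only [Mhess, of_apply, hi, hj]

-- Deleting the last row and the `j`-th column of `M_{k+1}` leaves a block lower triangular
-- matrix with diagonal blocks `M_j` and the superdiagonal entries `-(j+1), …, -k`.
theorem det_Mhess_minor {j k : ℕ} (h : j ≤ k) :
    ((Mhess (k + 1)).submatrix Fin.castSucc (Fin.succAbove ⟨j, Nat.lt_succ_of_le h⟩)).det
      = (-1) ^ (k - j) * (k.descFactorial (k - j) : Rt[X]) * (Mhess j).det := by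
  induction k, h using Nat.le_induction with
  | base =>
    simp only [Nat.sub_self, pow_zero, Nat.descFactorial_zero, Nat.cast_one, one_mul]
    show det ((Mhess (j + 1)).submatrix _ (Fin.last j).succAbove) = _
    rw [Fin.succAbove_last]
    rfl
  | succ k hk ih =>
    set A := (Mhess (k + 2)).submatrix Fin.castSucc (Fin.succAbove ⟨j, by omega⟩)
    have hcol : ∀ i : Fin (k + 1), A i (Fin.last k)
        = if i = Fin.last k then -((k + 1 : ℕ) : Rt[X]) else 0 := by
      intro i
      have : ((Fin.succAbove ⟨j, by omega⟩ (Fin.last k) : Fin (k + 2)) : ℕ) = k + 1 := by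
        rw [Fin.succAbove_of_le_castSucc _ _ (Fin.le_def.mpr (by simp; omega))]
        simp
      simp only [A, submatrix_apply, Mhess, of_apply, this, Fin.val_castSucc, Fin.ext_iff,
        Fin.val_last]
      split_ifs <;> first | omega | simp_all
    have hminor : A.submatrix (Fin.last k).succAbove (Fin.last k).succAbove
        = (Mhess (k + 1)).submatrix Fin.castSucc (Fin.succAbove ⟨j, by omega⟩) := by
      rw [Fin.succAbove_last]
      refine Matrix.ext fun r c => Mhess_apply_congr rfl ?_
      show ((Fin.castSucc ⟨j, by omega⟩ : Fin (k + 2)).succAbove c.castSucc : ℕ) = _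
      rw [Fin.castSucc_succAbove_castSucc, Fin.val_castSucc]
    rw [det_succ_column A (Fin.last k), sum_eq_single (Fin.last k) (fun i _ hi => by
      rw [hcol, if_neg hi, mul_zero, zero_mul]) (by simp), hcol, if_pos rfl, hminor, ih,
      show k + 1 - j = k - j + 1 by omega, Nat.succ_descFactorial_succ, Fin.val_last, ← two_mul,
      pow_mul]
    push_cast
    ring

theorem det_Mhess_succ (k : ℕ) :
    (Mhess (k + 1)).det
      = ∑ j ∈ range (k + 1), k.descFactorial (k - j) • (zj (k + 1 - j) * (Mhess j).det) := by
  rw [det_succ_row _ (Fin.last k), ← Fin.sum_univ_eq_sum_range]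
  refine sum_congr rfl fun j _ => ?_
  have hj : (j : ℕ) ≤ k := Nat.lt_succ_iff.mp j.isLt
  have hentry : Mhess (k + 1) (Fin.last k) j = zj (k + 1 - j) := by
    simp only [Mhess, of_apply, Fin.val_last, if_pos hj, Nat.sub_add_comm hj]
  have hsign : (-1 : Rt[X]) ^ (k + (j : ℕ)) * (-1) ^ (k - (j : ℕ)) = 1 := by
    rw [← pow_add, show k + (j : ℕ) + (k - j) = 2 * k by omega]
    exact Even.neg_one_pow (α := Rt[X]) (even_two_mul k)
  rw [hentry, Fin.succAbove_last, det_Mhess_minor hj, nsmul_eq_mul, Fin.val_last]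
  linear_combination (k.descFactorial (k - j) * zj (k + 1 - j) * (Mhess j).det) * hsign

theorem xpoly_eq_smul (n : ℕ) : xpoly n = ((n.factorial : ℚ)⁻¹) • (Mhess n).det := by
  rcases n with _ | n
  · simp [xpoly]
  · rw [xpoly, if_neg n.succ_ne_zero, Algebra.smul_def]
    rfl

theorem natCast_mul_xpoly (n : ℕ) :
    (n : Rt[X]) * xpoly n = ∑ j ∈ range n, zj (n - j) * xpoly j := by
  rcases n with _ | k
  · simp
  have hscalar : ∀ j ∈ range (k + 1),
      ((k.factorial : ℚ)⁻¹ * k.descFactorial (k - j) : ℚ) = (j.factorial : ℚ)⁻¹ := fun j hj => by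
    have := Nat.factorial_mul_descFactorial (Nat.sub_le k j)
    rw [Nat.sub_sub_self (Nat.lt_succ_iff.mp (mem_range.mp hj))] at this
    rw [← this]
    push_cast
    field_simp
  calc ((k + 1 : ℕ) : Rt[X]) * xpoly (k + 1) = (k.factorial : ℚ)⁻¹ • (Mhess (k + 1)).det := by
        rw [xpoly_eq_smul, ← nsmul_eq_mul, ← Nat.cast_smul_eq_nsmul ℚ, smul_smul,
          Nat.factorial_succ]
        congr 1
        push_cast
        field_simp
    _ = ∑ j ∈ range (k + 1), zj (k + 1 - j) * xpoly j := by
        rw [det_Mhess_succ, smul_sum]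
        refine sum_congr rfl fun j hj => ?_
        rw [xpoly_eq_smul, ← Nat.cast_smul_eq_nsmul ℚ, smul_smul, hscalar j hj, mul_smul_comm]

theorem eval_zj (m : ℕ) (c : Rt) : (zj m).eval c = (-1) ^ (m + 1) * (c + MvPolynomial.X m) := by
  simp [zj]

theorem xpoly_zero : xpoly 0 = 1 := by
  simp [xpoly]

theorem natCast_mul_eval_xpoly (n : ℕ) (c : Rt) :
    (n : Rt) * (xpoly n).eval c = ∑ j ∈ range n, (zj (n - j)).eval c * (xpoly j).eval c := by
  simpa [eval_finsetSum] using congrArg (eval c) (natCast_mul_xpoly n)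

theorem eval_add_one_xpoly_succ (k : ℕ) (c : Rt) :
    (xpoly (k + 1)).eval (c + 1) = (xpoly (k + 1)).eval c + (xpoly k).eval c := by
  induction k using Nat.strong_induction_on with
  | _ k ih =>
  have hk1 := natCast_mul_eval_xpoly (k + 1) c
  rw [sum_range_succ'] at hk1
  simp only [Nat.add_sub_add_right, Nat.sub_zero] at hk1
  have hk := natCast_mul_eval_xpoly k c
  set x : ℕ → Rt := fun j => (xpoly j).eval c
  have hx0 : x 0 = 1 := by simp [x, xpoly_zero]
  have hz : ∀ m, (zj m).eval (c + 1) = (zj m).eval c + (-1) ^ (m + 1) := fun m => by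
    simp only [eval_zj]; ring
  apply mul_left_cancel₀ (Nat.cast_ne_zero.mpr k.succ_ne_zero : ((k + 1 : ℕ) : Rt) ≠ 0)
  calc ((k + 1 : ℕ) : Rt) * (xpoly (k + 1)).eval (c + 1)
      = ∑ i ∈ range k, ((zj (k - i)).eval c + (-1) ^ (k - i + 1)) * (x (i + 1) + x i)
          + ((zj (k + 1)).eval c + (-1) ^ (k + 1 + 1)) * x 0 := by
        rw [natCast_mul_eval_xpoly, sum_range_succ']
        refine congrArg₂ (· + ·) (sum_congr rfl fun i hi => ?_) ?_
        · rw [Nat.add_sub_add_right, hz, ih i (mem_range.mp hi)]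
        · simp [hz, hx0, x, xpoly_zero]
    _ = (∑ i ∈ range k, (zj (k - i)).eval c * x (i + 1) + (zj (k + 1)).eval c * x 0)
          + (∑ i ∈ range k, (zj (k - i)).eval c * x i)
          + ∑ i ∈ range k, (-1 : Rt) ^ (k - i + 1) * (x (i + 1) + x i)
          + (-1) ^ (k + 1 + 1) * x 0 := by
        simp only [add_mul, mul_add, sum_add_distrib]
        ring
    _ = ((k + 1 : ℕ) : Rt) * ((xpoly (k + 1)).eval c + (xpoly k).eval c) := by
        rw [sum_range_neg_one_pow_mul_add_succ, ← hk1, ← hk, hx0]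
        push_cast
        ring

theorem pderiv_eval_zj {p : ℕ} {c : Rt} (hc : MvPolynomial.pderiv p c = 0) (m : ℕ) :
    MvPolynomial.pderiv p ((zj m).eval c) = if m = p then (-1) ^ (p + 1) else 0 := by
  rw [eval_zj, Derivation.leibniz, Derivation.leibniz_pow]
  split_ifs with h <;> simp [hc, MvPolynomial.pderiv_X, h]

-- For `n < p` both sides vanish, the right one because `n - p = 0` in `ℕ`.
theorem sum_mul_eval_xpoly_sub (p n : ℕ) (c : Rt) :
    ∑ j ∈ range n, (zj (n - j)).eval c * (if p ≤ j then (xpoly (j - p)).eval c else 0)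
      = ((n - p : ℕ) : Rt) * (xpoly (n - p)).eval c := by
  rcases le_or_gt p n with hpn | hnp
  · obtain ⟨m, rfl⟩ := Nat.exists_eq_add_of_le hpn
    rw [sum_range_add, sum_eq_zero fun j hj => by rw [if_neg (by simpa using hj), mul_zero],
      zero_add, Nat.add_sub_cancel_left, natCast_mul_eval_xpoly]
    refine sum_congr rfl fun i _ => ?_
    rw [if_pos (Nat.le_add_right p i), Nat.add_sub_add_left, Nat.add_sub_cancel_left]
  · rw [Nat.sub_eq_zero_of_le hnp.le, Nat.cast_zero, zero_mul]
    exact sum_eq_zero fun j hj => by rw [if_neg (by simp at hj; omega), mul_zero]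

theorem sum_eval_xpoly_mul_pderiv_eval_zj {p : ℕ} {c : Rt} (hc : MvPolynomial.pderiv p c = 0)
    (n : ℕ) :
    ∑ j ∈ range n, (xpoly j).eval c * MvPolynomial.pderiv p ((zj (n - j)).eval c)
      = if p ≠ 0 ∧ p ≤ n then (-1) ^ (p + 1) * (xpoly (n - p)).eval c else 0 := by
  simp only [pderiv_eval_zj hc, mul_ite, mul_zero]
  split_ifs with h
  · rw [sum_eq_single_of_mem (n - p) (by simp; omega) fun j hj hne => if_neg (by simp at hj; omega),
      if_pos (by omega), mul_comm]
  · exact sum_eq_zero fun j hj => if_neg (by simp at hj; omega)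

-- For `p = 0` the coefficient `(-1) / 0` is `0` in `ℚ`: the variable `t₀` does not occur.
theorem pderiv_eval_xpoly {p : ℕ} {c : Rt} (hc : MvPolynomial.pderiv p c = 0) (n : ℕ) :
    MvPolynomial.pderiv p ((xpoly n).eval c)
      = if p ≤ n then MvPolynomial.C ((-1) ^ (p + 1) / p : ℚ) * (xpoly (n - p)).eval c
        else 0 := by
  induction n using Nat.strong_induction_on with
  | _ n ih =>
  set a : Rt := MvPolynomial.C ((-1) ^ (p + 1) / p : ℚ)
  have hn : (n : Rt) * MvPolynomial.pderiv p ((xpoly n).eval c)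
      = a * (((n - p : ℕ) : Rt) * (xpoly (n - p)).eval c)
        + if p ≠ 0 ∧ p ≤ n then (-1) ^ (p + 1) * (xpoly (n - p)).eval c else 0 := by
    calc (n : Rt) * MvPolynomial.pderiv p ((xpoly n).eval c)
        = MvPolynomial.pderiv p ((n : Rt) * (xpoly n).eval c) := by
          rw [Derivation.leibniz, Derivation.map_natCast, smul_zero, add_zero, smul_eq_mul]
      _ = ∑ j ∈ range n, (a * ((zj (n - j)).eval c
              * (if p ≤ j then (xpoly (j - p)).eval c else 0))
            + (xpoly j).eval c * MvPolynomial.pderiv p ((zj (n - j)).eval c)) := by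
          rw [natCast_mul_eval_xpoly, map_sum]
          refine sum_congr rfl fun j hj => ?_
          rw [Derivation.leibniz, ih j (mem_range.mp hj), smul_eq_mul, smul_eq_mul]
          split_ifs <;> ring
      _ = _ := by
          rw [sum_add_distrib, ← mul_sum, sum_mul_eval_xpoly_sub,
            sum_eval_xpoly_mul_pderiv_eval_zj hc]
  rcases n with _ | k
  · rcases p with _ | p <;> simp [xpoly_zero, a]
  apply mul_left_cancel₀ (Nat.cast_ne_zero.mpr k.succ_ne_zero : ((k + 1 : ℕ) : Rt) ≠ 0)
  rw [hn]
  by_cases hp : p ≠ 0 ∧ p ≤ k + 1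
  · have hscalar : a * ((k + 1 - p : ℕ) : Rt) + (-1) ^ (p + 1) = ((k + 1 : ℕ) : Rt) * a := by
      have hsign : (-1 : Rt) ^ (p + 1) = MvPolynomial.C ((-1) ^ (p + 1)) := by simp
      rw [hsign, ← map_natCast MvPolynomial.C, ← map_natCast MvPolynomial.C, ← map_mul, ← map_add,
        ← map_mul, Nat.cast_sub hp.2]
      congr 1
      field_simp [hp.1]
      ring
    rw [if_pos hp, if_pos hp.2]
    linear_combination (xpoly (k + 1 - p)).eval c * hscalar
  · rw [if_neg hp]
    rcases Nat.eq_zero_or_pos p with rfl | hpos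
    · simp [a]
    · rw [if_neg (by omega), Nat.sub_eq_zero_of_le (by omega)]
      simp

noncomputable def casoratiMatrix (n : ℕ) : Matrix (Fin n) (Fin n) Rt :=
  of fun i j => (xpoly (2 * i + 1)).eval ((j : ℕ) : Rt)

theorem qval_eq_det_casoratiMatrix (n : ℕ) : qval n = (casoratiMatrix n).det := by
  rw [qval, Qcas, ← coe_evalRingHom, RingHom.map_det]
  congr 1
  refine Matrix.ext fun i j => ?_
  simp [casoratiMatrix, eval_comp]

theorem eval_succ_sub_eval_xpoly_succ (n j : ℕ) :
    (xpoly (n + 1)).eval ((j + 1 : ℕ) : Rt) - (xpoly (n + 1)).eval (j : Rt)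
      = (xpoly n).eval (j : Rt) := by
  rw [Nat.cast_succ, eval_add_one_xpoly_succ, add_sub_cancel_left]

theorem det_of_eval_xpoly_two_mul (k : ℕ) :
    (of fun i j : Fin k => (xpoly (2 * i)).eval ((j : ℕ) : Rt)).det
      = if k = 0 then 1 else qval (k - 1) := by
  rcases k with _ | m
  · simp
  rw [det_eq_of_row_eq_one _ 0 fun j => by simp [xpoly_zero], qval_eq_det_casoratiMatrix]
  simp only [Fin.val_zero, pow_zero, one_mul, if_neg m.succ_ne_zero]
  congr 1
  refine Matrix.ext fun i j => ?_
  simp only [of_apply, Fin.succAbove_zero, Fin.val_succ, Fin.val_castSucc, casoratiMatrix,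
    mul_add, mul_one]
  exact eval_succ_sub_eval_xpoly_succ _ _

theorem det_updateRow_last_one_casoratiMatrix (k : ℕ) :
    ((casoratiMatrix (k + 1)).updateRow (Fin.last k) 1).det
      = (-1) ^ k * if k = 0 then 1 else qval (k - 1) := by
  rw [det_eq_of_row_eq_one _ (Fin.last k) fun j => by simp, Fin.val_last,
    ← det_of_eval_xpoly_two_mul]
  congr 2
  refine Matrix.ext fun i j => ?_
  simp only [of_apply, Fin.succAbove_last, updateRow_ne (Fin.castSucc_lt_last i).ne, casoratiMatrix,
    Fin.val_succ, Fin.val_castSucc]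
  exact eval_succ_sub_eval_xpoly_succ _ _

theorem pderiv_casoratiMatrix (p : ℕ) {n : ℕ} (i j : Fin n) :
    MvPolynomial.pderiv p (casoratiMatrix n i j)
      = if p ≤ 2 * i + 1 then
          MvPolynomial.C ((-1) ^ (p + 1) / p : ℚ) * (xpoly (2 * i + 1 - p)).eval ((j : ℕ) : Rt)
        else 0 :=
  pderiv_eval_xpoly (Derivation.map_natCast _ _) _

theorem det_updateRow_pderiv_casoratiMatrix_eq_zero {p n : ℕ} (i : Fin n)
    (hp : Even p ∨ 2 * (i : ℕ) + 1 < p) :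
    ((casoratiMatrix n).updateRow i fun j => MvPolynomial.pderiv p (casoratiMatrix n i j)).det
      = 0 := by
  by_cases hle : p ≤ 2 * i + 1
  · obtain ⟨q, rfl⟩ : Even p := hp.resolve_right (by omega)
    have hrow : (fun j => MvPolynomial.pderiv (q + q) (casoratiMatrix n i j))
        = (MvPolynomial.C ((-1) ^ (q + q + 1) / (q + q : ℕ) : ℚ) : Rt)
          • casoratiMatrix n ⟨i - q, by omega⟩ := by
      funext j
      rw [pderiv_casoratiMatrix, if_pos hle, Pi.smul_apply, smul_eq_mul, casoratiMatrix, of_apply,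
        show 2 * (i : ℕ) + 1 - (q + q) = 2 * (i - q) + 1 by omega]
    rw [hrow, det_updateRow_smul]
    rcases Nat.eq_zero_or_pos q with rfl | hq
    · simp
    · rw [det_updateRow_eq_zero (Fin.ne_of_val_ne (by simp; omega)), mul_zero]
  · exact det_eq_zero_of_row_eq_zero i fun j => by
      rw [updateRow_self, pderiv_casoratiMatrix, if_neg hle]

/-- The paper's index `k` is `k + 1` here, so `t_{2k-1}` is `t (2 * k + 1)`, `(-1)^{k+1}` is
`(-1)^(k+2)`, and `q_{k-2}` is `qval (k - 1)`, with `q₋₁ = 1` when `k = 0`. -/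
theorem qval_odd_dependence (k : ℕ) :
    (∀ j : ℕ, (Even j ∨ 2 * k + 1 < j) → MvPolynomial.pderiv j (qval (k + 1)) = 0) ∧
    MvPolynomial.pderiv (2 * k + 1) (qval (k + 1))
      = MvPolynomial.C ((-1 : ℚ) ^ (k + 2) * (2 * (k : ℚ) + 1)⁻¹)
          * (if k = 0 then 1 else qval (k - 1)) := by
  simp only [qval_eq_det_casoratiMatrix (k + 1), Derivation.map_det]
  refine ⟨fun j hj => sum_eq_zero fun i _ =>
    det_updateRow_pderiv_casoratiMatrix_eq_zero i (hj.imp_right fun h => by omega), ?_⟩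
  rw [sum_eq_single (Fin.last k) (fun i _ hi => det_updateRow_pderiv_casoratiMatrix_eq_zero i
    (Or.inr (by have := Fin.val_lt_last hi; omega))) (by simp)]
  have hrow : (fun j => MvPolynomial.pderiv (2 * k + 1) (casoratiMatrix (k + 1) (Fin.last k) j))
      = (MvPolynomial.C ((-1) ^ (2 * k + 1 + 1) / (2 * k + 1 : ℕ) : ℚ) : Rt) • 1 := by
    funext j
    simp [pderiv_casoratiMatrix, xpoly_zero]
  rw [hrow, det_updateRow_smul, det_updateRow_last_one_casoratiMatrix, ← mul_assoc]
  have hcoeff : (-1 : ℚ) ^ (2 * k + 1 + 1) / (2 * k + 1 : ℕ) * (-1) ^ k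
      = (-1) ^ (k + 2) * (2 * (k : ℚ) + 1)⁻¹ := by
    rw [Even.neg_one_pow ⟨k + 1, by ring⟩]
    push_cast
    ring
  rw [show (-1 : Rt) ^ k = MvPolynomial.C ((-1) ^ k) by simp, ← map_mul, hcoeff]
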